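/- Every generalized Euclidean distance matrix D is similar to a real symmetric matrix; in particular all eigenvalues of D are real. -/

import Mathlib

/-!
Let `E t = 1 + ((t - 1) / n) J`, with `J` the all-ones matrix: it scales the all-ones vector by `t`
and fixes its orthogonal complement, so `E s * E t = E (s * t)`. Since `L` has zero row and column
sums, multiplying `D = a² diag(L) 1ᵀ + b² 1 diag(L)ᵀ - 2ab L` on the left by `E r` only adds a
constant matrix and rescales the `b²` term by `r`; for `r = (a / b)²` the product `E r * D` is
therefore symmetric. With `X = E (b / a)` this gives `X⁻¹ D X = X (E r D) X`, which is symmetric.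
Its eigenvalues, and hence those of `D`, are real.
-/

open Matrix

namespace Matrix

variable {ι : Type*} [Fintype ι]

def gedm (a b : ℝ) (L : Matrix ι ι ℝ) : Matrix ι ι ℝ :=
  of fun i j => a ^ 2 * L i i + b ^ 2 * L j j - 2 * a * b * L i j

theorem sum_gedm_apply {L : Matrix ι ι ℝ} (hL : L.IsSymm) (hL1 : L *ᵥ 1 = 0) (a b : ℝ) (j : ι) :
    ∑ k, gedm a b L k j = a ^ 2 * L.trace + Fintype.card ι * b ^ 2 * L j j := by
  have hcol : ∑ k, L k j = 0 := by
    simpa [hL.apply, mulVec, dotProduct] using congrFun hL1 j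
  simp only [gedm, of_apply, Finset.sum_sub_distrib, Finset.sum_add_distrib, ← Finset.mul_sum,
    Finset.sum_const, Finset.card_univ, nsmul_eq_mul, hcol, mul_zero, sub_zero, trace, diag_apply]
  ring

variable [DecidableEq ι]

variable (ι) in
/-- The matrix scaling the all-ones vector by `t` and fixing its orthogonal complement. -/
noncomputable def onesScaling (t : ℝ) : Matrix ι ι ℝ :=
  1 + ((t - 1) / Fintype.card ι) • of fun _ _ => 1

theorem onesScaling_mul_apply (r : ℝ) (M : Matrix ι ι ℝ) (i j : ι) :
    (onesScaling ι r * M) i j = M i j + (r - 1) / Fintype.card ι * ∑ k, M k j := by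
  simp [onesScaling, add_mul, mul_apply, Finset.mul_sum, Finset.sum_add_distrib, one_apply]

theorem sum_onesScaling_apply [Nonempty ι] (t : ℝ) (j : ι) : ∑ k, onesScaling ι t k j = t := by
  have hn : (Fintype.card ι : ℝ) ≠ 0 := by positivity
  simp only [onesScaling, add_apply, smul_apply, of_apply, smul_eq_mul, mul_one,
    Finset.sum_add_distrib, one_apply, Finset.sum_ite_eq', Finset.mem_univ, if_true,
    Finset.sum_const, Finset.card_univ, nsmul_eq_mul]
  field_simp
  ring

theorem onesScaling_mul (s t : ℝ) : onesScaling ι s * onesScaling ι t = onesScaling ι (s * t) := by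
  cases isEmpty_or_nonempty ι
  · exact Subsingleton.elim _ _
  ext i j
  rw [onesScaling_mul_apply, sum_onesScaling_apply]
  simp only [onesScaling, add_apply, smul_apply, of_apply, smul_eq_mul, mul_one]
  ring

theorem onesScaling_one : onesScaling ι 1 = 1 := by
  simp [onesScaling]

theorem isSymm_onesScaling (t : ℝ) : (onesScaling ι t).IsSymm :=
  isSymm_one.add ((IsSymm.ext fun _ _ => rfl).smul _)

theorem onesScaling_mul_onesScaling_inv {t : ℝ} (ht : t ≠ 0) :
    onesScaling ι t * onesScaling ι t⁻¹ = 1 := by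
  rw [onesScaling_mul, mul_inv_cancel₀ ht, onesScaling_one]

theorem isUnit_onesScaling {t : ℝ} (ht : t ≠ 0) : IsUnit (onesScaling ι t) :=
  .of_mul_eq_one _ (onesScaling_mul_onesScaling_inv ht)

theorem inv_onesScaling {t : ℝ} (ht : t ≠ 0) : (onesScaling ι t)⁻¹ = onesScaling ι t⁻¹ :=
  inv_eq_right_inv (onesScaling_mul_onesScaling_inv ht)

theorem isSymm_onesScaling_mul_gedm {L : Matrix ι ι ℝ} (hL : L.IsSymm) (hL1 : L *ᵥ 1 = 0)
    {a b r : ℝ} (hr : r * b ^ 2 = a ^ 2) : (onesScaling ι r * gedm a b L).IsSymm := by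
  refine IsSymm.ext fun i j => ?_
  have hn : (Fintype.card ι : ℝ) ≠ 0 := by have : Nonempty ι := ⟨i⟩; positivity
  rw [onesScaling_mul_apply, onesScaling_mul_apply, sum_gedm_apply hL hL1, sum_gedm_apply hL hL1]
  simp only [gedm, of_apply, hL.apply i j]
  field_simp
  linear_combination (Fintype.card ι : ℝ) * (L i i - L j j) * hr

theorem IsSymm.inv_mul_mul_of_isSymm_inv_mul_inv_mul {X M : Matrix ι ι ℝ} (hX : X.IsSymm)
    (hXu : IsUnit X) (h : (X⁻¹ * X⁻¹ * M).IsSymm) : (X⁻¹ * M * X).IsSymm := by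
  have hXX : X * X⁻¹ = 1 := mul_nonsing_inv X ((isUnit_iff_isUnit_det X).mp hXu)
  have : X⁻¹ * M * X = X * (X⁻¹ * X⁻¹ * M) * X := by
    rw [Matrix.mul_assoc X⁻¹ X⁻¹ M, ← Matrix.mul_assoc X X⁻¹, hXX, Matrix.one_mul]
  rw [this, IsSymm, transpose_mul, transpose_mul, hX.eq, h.eq, ← Matrix.mul_assoc]

theorem IsSymm.im_eq_zero_of_mem_spectrum_map {S : Matrix ι ι ℝ} (hS : S.IsSymm) {μ : ℂ}
    (hμ : μ ∈ spectrum ℂ (S.map Complex.ofReal)) : μ.im = 0 := by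
  have hH : (S.map Complex.ofReal).IsHermitian := by
    ext i j
    simp [hS.apply i j]
  rw [hH.spectrum_eq_image_range] at hμ
  obtain ⟨_, ⟨i, rfl⟩, rfl⟩ := hμ
  simp

theorem im_eq_zero_of_mem_spectrum_map_of_isSymm_inv_mul_mul {M X : Matrix ι ι ℝ} (hX : IsUnit X)
    (hS : (X⁻¹ * M * X).IsSymm) {μ : ℂ} (hμ : μ ∈ spectrum ℂ (M.map Complex.ofReal)) :
    μ.im = 0 := by
  have hXX : X * X⁻¹ = 1 := mul_nonsing_inv X ((isUnit_iff_isUnit_det X).mp hX)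
  have hM : M = X * (X⁻¹ * M * X) * X⁻¹ := by
    rw [Matrix.mul_assoc, Matrix.mul_assoc, hXX, Matrix.mul_one, ← Matrix.mul_assoc, hXX,
      Matrix.one_mul]
  let u := Units.map (RingHom.mapMatrix Complex.ofRealHom : Matrix ι ι ℝ →+* _).toMonoidHom hX.unit
  have hconj : M.map Complex.ofReal =
      u * (X⁻¹ * M * X).map Complex.ofReal * (↑u⁻¹ : Matrix ι ι ℂ) := by
    change M.map Complex.ofRealHom = _
    conv_lhs => rw [hM]
    rw [Matrix.map_mul, Matrix.map_mul]
    simp only [u, Units.coe_map, Units.coe_map_inv, coe_units_inv, IsUnit.unit_spec]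
    rfl
  rw [hconj, spectrum.units_conjugate] at hμ
  exact hS.im_eq_zero_of_mem_spectrum_map hμ

end Matrix

theorem stmt3 (n : ℕ) (L D : Matrix (Fin n) (Fin n) ℝ) (hL : L.PosSemidef)
    (hL1 : L *ᵥ (fun _ => (1 : ℝ)) = 0) (a b : ℝ) (ha : 0 < a) (hb : 0 < b)
    (hD : ∀ i j, D i j = a ^ 2 * L i i + b ^ 2 * L j j - 2 * a * b * L i j) :
    (∃ A : Matrix (Fin n) (Fin n) ℝ, IsUnit A ∧ (A⁻¹ * D * A).IsSymm) ∧
    (∀ μ ∈ spectrum ℂ (D.map Complex.ofReal), μ.im = 0) := by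
  have hDL : D = gedm a b L := ext hD
  have ht : b / a ≠ 0 := div_ne_zero hb.ne' ha.ne'
  have hsymm : ((onesScaling (Fin n) (b / a))⁻¹ * D * onesScaling (Fin n) (b / a)).IsSymm := by
    refine (isSymm_onesScaling _).inv_mul_mul_of_isSymm_inv_mul_inv_mul (isUnit_onesScaling ht) ?_
    rw [inv_onesScaling ht, onesScaling_mul, hDL]
    refine isSymm_onesScaling_mul_gedm (isHermitian_iff_isSymm.mp hL.1) hL1 ?_
    field_simp
  exact ⟨⟨_, isUnit_onesScaling ht, hsymm⟩,
    fun μ => im_eq_zero_of_mem_spectrum_map_of_isSymm_inv_mul_mul (isUnit_onesScaling ht) hsymm⟩
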